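/- arXiv:1208.1469 — 2 statements merged into one kernel-verified Lean document; each statement's English description precedes it below -/
import Mathlib

section
/- Interpolation estimate for the discrete Laplacian: for every periodic grid function φ and every ε > 0, ‖Δ_hφ‖₂² ≤ (1/(3ε²))·‖φ‖₂² + (2ε/3)·‖∇_h(Δ_hφ)‖₂². -/
/-!
Summation by parts on the torus gives `‖Δₕφ‖₂² = -⟨∇ₕφ, ∇ₕΔₕφ⟩` and `‖∇ₕφ‖₂² = -⟨Δₕφ, φ⟩`.
Young's inequality with weight `ε` in both identities yields
`‖Δₕφ‖₂² ≤ ‖∇ₕφ‖₂²/(2ε) + (ε/2)‖∇ₕΔₕφ‖₂²` and `‖∇ₕφ‖₂² ≤ ‖φ‖₂²/(2ε) + (ε/2)‖Δₕφ‖₂²`;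
substituting the second into the first and absorbing `‖Δₕφ‖₂²/4` gives the estimate.
-/

open Finset

noncomputable section

/-- Periodic grid functions on an `m × n` grid (indices taken modulo `m` and `n`). -/
abbrev Grid (m n : ℕ) := ZMod m × ZMod n → ℝ

/-- Forward difference in the `x` direction. -/
def Dx {m n : ℕ} (h : ℝ) (φ : Grid m n) : Grid m n :=
  fun p => (φ (p.1 + 1, p.2) - φ p) / h

/-- Forward difference in the `y` direction. -/
def Dy {m n : ℕ} (h : ℝ) (φ : Grid m n) : Grid m n :=
  fun p => (φ (p.1, p.2 + 1) - φ p) / h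

/-- The five-point discrete Laplacian. -/
def lapH {m n : ℕ} (h : ℝ) (φ : Grid m n) : Grid m n :=
  fun p => (φ (p.1 + 1, p.2) + φ (p.1 - 1, p.2) + φ (p.1, p.2 + 1) + φ (p.1, p.2 - 1)
    - 4 * φ p) / h ^ 2

/-- Discrete `L²` norm. -/
def norm2 {m n : ℕ} [NeZero m] [NeZero n] (h : ℝ) (φ : Grid m n) : ℝ :=
  Real.sqrt (h ^ 2 * ∑ p : ZMod m × ZMod n, φ p ^ 2)

/-- Discrete `L²` norm of the gradient. -/
def gradNorm2 {m n : ℕ} [NeZero m] [NeZero n] (h : ℝ) (φ : Grid m n) : ℝ :=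
  Real.sqrt (h ^ 2 * ∑ p : ZMod m × ZMod n, (Dx h φ p ^ 2 + Dy h φ p ^ 2))

theorem sum_sub_shift_mul {G : Type*} [AddCommGroup G] [Fintype G] (c : G) (u g : G → ℝ) :
    ∑ p, (u p - u (p - c)) * g p = -∑ p, u p * (g (p + c) - g p) := by
  have hshift : ∑ p, u (p - c) * g p = ∑ p, u p * g (p + c) :=
    (Equiv.subRight c).sum_comp (fun p => u p * g (p + c)) ▸ by simp
  simp only [sub_mul, mul_sub, sum_sub_distrib, hshift]
  ring

lemma neg_mul_le_young {ε : ℝ} (hε : 0 < ε) (x y : ℝ) :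
    -(x * y) ≤ x ^ 2 / (2 * ε) + ε / 2 * y ^ 2 := by
  have hsq : 0 ≤ (x + ε * y) ^ 2 / (2 * ε) := by positivity
  have hexp : (x + ε * y) ^ 2 / (2 * ε) = x ^ 2 / (2 * ε) + x * y + ε / 2 * y ^ 2 := by
    field_simp; ring
  linarith

lemma neg_sum_mul_le_young {ε : ℝ} (hε : 0 < ε) {ι : Type*} [Fintype ι] (f g : ι → ℝ) :
    -∑ p, f p * g p ≤ (∑ p, f p ^ 2) / (2 * ε) + ε / 2 * ∑ p, g p ^ 2 := by
  rw [← sum_neg_distrib, sum_div, mul_sum, ← sum_add_distrib]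
  exact sum_le_sum fun p _ => neg_mul_le_young hε (f p) (g p)

section Grid
variable {m n : ℕ}

-- Written so that `sum_sub_shift_mul` applies to `q ↦ φ (q + c) - φ q` for both unit steps `c`.
lemma lapH_mul_eq (h : ℝ) (φ g : Grid m n) (p : ZMod m × ZMod n) :
    lapH h φ p * g p =
      ((φ (p + (1, 0)) - φ p - (φ (p - (1, 0) + (1, 0)) - φ (p - (1, 0)))) * g p
        + (φ (p + (0, 1)) - φ p - (φ (p - (0, 1) + (0, 1)) - φ (p - (0, 1)))) * g p) / h ^ 2 := by
  obtain ⟨i, j⟩ := p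
  simp only [lapH, Prod.mk_add_mk, Prod.mk_sub_mk, add_zero, sub_zero, sub_add_cancel]
  ring

lemma Dx_mul_Dx_add_Dy_mul_Dy (h : ℝ) (φ g : Grid m n) (p : ZMod m × ZMod n) :
    Dx h φ p * Dx h g p + Dy h φ p * Dy h g p =
      ((φ (p + (1, 0)) - φ p) * (g (p + (1, 0)) - g p)
        + (φ (p + (0, 1)) - φ p) * (g (p + (0, 1)) - g p)) / h ^ 2 := by
  obtain ⟨i, j⟩ := p
  simp only [Dx, Dy, Prod.mk_add_mk, add_zero]
  ring

variable [NeZero m] [NeZero n]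

theorem sum_lapH_mul (h : ℝ) (φ g : Grid m n) :
    ∑ p, lapH h φ p * g p = -∑ p, (Dx h φ p * Dx h g p + Dy h φ p * Dy h g p) := by
  simp only [lapH_mul_eq, Dx_mul_Dx_add_Dy_mul_Dy, ← sum_div, sum_add_distrib,
    sum_sub_shift_mul (1, 0) (fun p => φ (p + (1, 0)) - φ p),
    sum_sub_shift_mul (0, 1) (fun p => φ (p + (0, 1)) - φ p)]
  ring

lemma neg_sum_grad_mul_le_young {ε : ℝ} (hε : 0 < ε) (h : ℝ) (f g : Grid m n) :
    -∑ p, (Dx h f p * Dx h g p + Dy h f p * Dy h g p) ≤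
      (∑ p, (Dx h f p ^ 2 + Dy h f p ^ 2)) / (2 * ε)
        + ε / 2 * ∑ p, (Dx h g p ^ 2 + Dy h g p ^ 2) := by
  rw [← sum_neg_distrib, sum_div, mul_sum, ← sum_add_distrib]
  refine sum_le_sum fun p _ => ?_
  have hx := neg_mul_le_young hε (Dx h f p) (Dx h g p)
  have hy := neg_mul_le_young hε (Dy h f p) (Dy h g p)
  linarith [add_div (Dx h f p ^ 2) (Dy h f p ^ 2) (2 * ε)]

theorem sum_sq_lapH_le {ε : ℝ} (hε : 0 < ε) (h : ℝ) (φ : Grid m n) :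
    ∑ p, lapH h φ p ^ 2 ≤ 1 / (3 * ε ^ 2) * ∑ p, φ p ^ 2
      + 2 * ε / 3 * ∑ p, (Dx h (lapH h φ) p ^ 2 + Dy h (lapH h φ) p ^ 2) := by
  set ψ := lapH h φ
  set S := ∑ p, ψ p ^ 2
  set B := ∑ p, (Dx h φ p ^ 2 + Dy h φ p ^ 2)
  have hS : S ≤ B / (2 * ε) + ε / 2 * ∑ p, (Dx h ψ p ^ 2 + Dy h ψ p ^ 2) := by
    calc S = -∑ p, (Dx h φ p * Dx h ψ p + Dy h φ p * Dy h ψ p) := by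
          simp only [S, sq]
          exact sum_lapH_mul h φ ψ
      _ ≤ _ := neg_sum_grad_mul_le_young hε h φ ψ
  have hB : B ≤ (∑ p, φ p ^ 2) / (2 * ε) + ε / 2 * S := by
    calc B = -∑ p, φ p * ψ p := by
          simp only [B, ψ, mul_comm (φ _), sum_lapH_mul, neg_neg, sq]
      _ ≤ _ := neg_sum_mul_le_young hε φ ψ
  have hBS : B / (2 * ε) ≤ 3 / 4 * (1 / (3 * ε ^ 2) * ∑ p, φ p ^ 2) + S / 4 := by
    calc B / (2 * ε) ≤ ((∑ p, φ p ^ 2) / (2 * ε) + ε / 2 * S) / (2 * ε) := by gcongr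
      _ = _ := by field_simp; ring
  linarith

lemma norm2_sq (h : ℝ) (φ : Grid m n) : norm2 h φ ^ 2 = h ^ 2 * ∑ p, φ p ^ 2 :=
  Real.sq_sqrt (by positivity)

lemma gradNorm2_sq (h : ℝ) (φ : Grid m n) :
    gradNorm2 h φ ^ 2 = h ^ 2 * ∑ p, (Dx h φ p ^ 2 + Dy h φ p ^ 2) :=
  Real.sq_sqrt (by positivity)

end Grid

theorem discrete_laplacian_interpolation_general (m n : ℕ) [NeZero m] [NeZero n]
    (h : ℝ) (φ : Grid m n) (ε : ℝ) (hε : 0 < ε) :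
    norm2 h (lapH h φ) ^ 2
      ≤ 1 / (3 * ε ^ 2) * norm2 h φ ^ 2 + 2 * ε / 3 * gradNorm2 h (lapH h φ) ^ 2 := by
  rw [norm2_sq, norm2_sq, gradNorm2_sq]
  have := mul_le_mul_of_nonneg_left (sum_sq_lapH_le hε h φ) (sq_nonneg h)
  linarith

/-- Interpolation estimate for the discrete Laplacian:
`‖Δₕφ‖₂² ≤ (1/(3ε²)) ‖φ‖₂² + (2ε/3) ‖∇ₕ(Δₕφ)‖₂²` for every `ε > 0`. -/
theorem discrete_laplacian_interpolation (m n : ℕ) [NeZero m] [NeZero n]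
    (h : ℝ) (hh : 0 < h) (φ : Grid m n) (ε : ℝ) (hε : 0 < ε) :
    norm2 h (lapH h φ) ^ 2
      ≤ 1 / (3 * ε ^ 2) * norm2 h φ ^ 2 + 2 * ε / 3 * gradNorm2 h (lapH h φ) ^ 2 :=
  discrete_laplacian_interpolation_general m n h φ ε hε
end
end

section
/- Mass conservation for the second-order convex splitting scheme: if periodic grid functions φ^{k−1}, φ^k, ψ^k with Σ_{i,j} ψ^k(i,j) = 0 are given and (φ^{k+1}, ψ^{k+1}) is a periodic solution of the second-order convex splitting scheme, then Σ_{i,j} φ^{k+1}(i,j) = Σ_{i,j} φ^k(i,j) and Σ_{i,j} ψ^{k+1}(i,j) = 0. -/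
open Finset

noncomputable section

/-- The discrete chemical potential `μ` of the second-order convex splitting scheme,
built from `φ^{k−1} = φm`, `φ^k = φk` and the unknown `φ^{k+1} = φn`. -/
def chemPot {m n : ℕ} (α h : ℝ) (φm φk φn : Grid m n) : Grid m n :=
  fun p => (φn p ^ 2 + φk p ^ 2) / 2 * ((φn p + φk p) / 2)
    + α * ((φn p + φk p) / 2)
    + lapH h (fun q => 3 * φk q - φm q) p
    + lapH h (lapH h (fun q => (φn q + φk q) / 2)) p

/-- The second-order convex splitting scheme for the MPFC equation:
`β(ψ^{k+1} − ψ^k) = s Δₕμ − s ψ^{k+1/2}` and `φ^{k+1} − φ^k = s ψ^{k+1/2}`. -/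
def Scheme {m n : ℕ} (β α s h : ℝ) (φm φk ψk φn ψn : Grid m n) : Prop :=
  (∀ p, β * (ψn p - ψk p)
      = s * lapH h (chemPot α h φm φk φn) p - s * ((ψn p + ψk p) / 2)) ∧
  (∀ p, φn p - φk p = s * ((ψn p + ψk p) / 2))

lemma sum_shift {m n : ℕ} [NeZero m] [NeZero n] (f : Grid m n) (a : ZMod m) (b : ZMod n) :
    ∑ p : ZMod m × ZMod n, f (p.1 + a, p.2 + b) = ∑ p : ZMod m × ZMod n, f p := by
  exact Fintype.sum_equiv ((Equiv.addRight a).prodCongr (Equiv.addRight b)) _ _ (fun p => rfl)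

lemma sum_lapH {m n : ℕ} [NeZero m] [NeZero n] (h : ℝ) (φ : Grid m n) :
    ∑ p : ZMod m × ZMod n, lapH h φ p = 0 := by
  unfold lapH
  rw [← Finset.sum_div]
  have h1 : ∑ p : ZMod m × ZMod n, φ (p.1 + 1, p.2) = ∑ p : ZMod m × ZMod n, φ p := by
    simpa using sum_shift φ 1 0
  have h2 : ∑ p : ZMod m × ZMod n, φ (p.1 - 1, p.2) = ∑ p : ZMod m × ZMod n, φ p := by
    simpa [sub_eq_add_neg] using sum_shift φ (-1) 0
  have h3 : ∑ p : ZMod m × ZMod n, φ (p.1, p.2 + 1) = ∑ p : ZMod m × ZMod n, φ p := by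
    simpa using sum_shift φ 0 1
  have h4 : ∑ p : ZMod m × ZMod n, φ (p.1, p.2 - 1) = ∑ p : ZMod m × ZMod n, φ p := by
    simpa [sub_eq_add_neg] using sum_shift φ 0 (-1)
  simp only [Finset.sum_sub_distrib, Finset.sum_add_distrib, h1, h2, h3, h4,
    ← Finset.mul_sum]
  ring

/-- Mass conservation for the second-order convex splitting scheme: if `∑ ψ^k = 0` and
`(φ^{k+1}, ψ^{k+1})` solves the scheme, then `∑ φ^{k+1} = ∑ φ^k` and `∑ ψ^{k+1} = 0`. -/
theorem scheme_mass_conservation (m n : ℕ) [NeZero m] [NeZero n]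
    (β α s h : ℝ) (hβ : 0 < β) (hα : 0 < α) (hs : 0 < s) (hh : 0 < h)
    (φm φk ψk φn ψn : Grid m n)
    (hψk : ∑ p : ZMod m × ZMod n, ψk p = 0)
    (hScheme : Scheme β α s h φm φk ψk φn ψn) :
    (∑ p : ZMod m × ZMod n, φn p = ∑ p : ZMod m × ZMod n, φk p) ∧
    (∑ p : ZMod m × ZMod n, ψn p = 0) := by
  obtain ⟨h1, h2⟩ := hScheme
  have e1 : β * (∑ p : ZMod m × ZMod n, ψn p - ∑ p : ZMod m × ZMod n, ψk p)
      = s * (∑ p : ZMod m × ZMod n, lapH h (chemPot α h φm φk φn) p)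
        - s * ((∑ p : ZMod m × ZMod n, ψn p + ∑ p : ZMod m × ZMod n, ψk p) / 2) := by
    have key : ∑ p : ZMod m × ZMod n, β * (ψn p - ψk p)
        = ∑ p : ZMod m × ZMod n,
          (s * lapH h (chemPot α h φm φk φn) p - s * ((ψn p + ψk p) / 2)) :=
      Finset.sum_congr rfl (fun p _ => h1 p)
    simp only [mul_sub, mul_div_assoc, mul_add, Finset.sum_sub_distrib,
      Finset.sum_add_distrib, Finset.sum_div, ← Finset.mul_sum] at key ⊢
    have split : ∑ i : ZMod m × ZMod n, (ψn i + ψk i) / 2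
        = (∑ p : ZMod m × ZMod n, ψn p + ∑ p : ZMod m × ZMod n, ψk p) / 2 := by
      rw [← Finset.sum_div, Finset.sum_add_distrib]
    rw [split] at key
    linarith
  rw [sum_lapH, hψk] at e1
  have hψn : ∑ p : ZMod m × ZMod n, ψn p = 0 := by
    have : (β + s / 2) * ∑ p : ZMod m × ZMod n, ψn p = 0 := by linarith
    have hne : β + s / 2 ≠ 0 := by positivity
    exact (mul_eq_zero.mp this).resolve_left hne
  refine ⟨?_, hψn⟩
  have e2 : ∑ p : ZMod m × ZMod n, φn p - ∑ p : ZMod m × ZMod n, φk p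
      = s * ((∑ p : ZMod m × ZMod n, ψn p + ∑ p : ZMod m × ZMod n, ψk p) / 2) := by
    have key : ∑ p : ZMod m × ZMod n, (φn p - φk p)
        = ∑ p : ZMod m × ZMod n, s * ((ψn p + ψk p) / 2) :=
      Finset.sum_congr rfl (fun p _ => h2 p)
    simp only [mul_div_assoc, mul_add, Finset.sum_sub_distrib, Finset.sum_add_distrib,
      Finset.sum_div, ← Finset.mul_sum] at key ⊢
    have split : ∑ i : ZMod m × ZMod n, (ψn i + ψk i) / 2
        = (∑ p : ZMod m × ZMod n, ψn p + ∑ p : ZMod m × ZMod n, ψk p) / 2 := by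
      rw [← Finset.sum_div, Finset.sum_add_distrib]
    rw [split] at key
    linarith
  rw [hψn, hψk] at e2
  linarith
end
end
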